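/- Let E = [−2π, −π) ∪ [π, 2π). There exists a measurable set G₀ ⊆ (([−2π, −11π/8) ∪ [−9π/8, −π)) − 2π) ∪ [−2π, −3π/2) that is 2π-translation congruent to [−2π, −11π/8) ∪ [−9π/8, −π) and 2-dilation congruent to [−2π, −3π/2), and for any such G₀ the set G = [5π/8, 7π/8) ∪ [π, 5π/4) ∪ [7π/2, 4π) ∪ [−3π/4, −π/2) ∪ G₀ is a dyadic wavelet set contained in (E − 2π) ∪ E ∪ (E + 2π) for which G ∩ [−π, π) has positive measure and (E, G) is not an interpolation pair. In particular, a wavelet set contained in (E − 2π) ∪ E ∪ (E + 2π) need not form an interpolation pair with E. -/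

import Mathlib

open MeasureTheory Set
open scoped Real symmDiff

noncomputable section

/-- An a.e. (modulo Lebesgue-null sets) partition of the set `A` by the family `P`. -/
def IsAEPartition {ι : Type*} (P : ι → Set ℝ) (A : Set ℝ) : Prop :=
  volume (A ∆ (⋃ i, P i)) = 0 ∧ ∀ i j : ι, i ≠ j → volume (P i ∩ P j) = 0

/-- `E ⊆ ℝ` is a dyadic wavelet set: its `2πℤ`-translates and its `2ℤ`-dilates each
partition `ℝ` modulo Lebesgue-null sets. -/
def IsDyadicWaveletSet (E : Set ℝ) : Prop :=
  MeasurableSet E ∧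
  (∀ᵐ x : ℝ ∂volume, ∃! n : ℤ, x + 2 * Real.pi * n ∈ E) ∧
  (∀ᵐ x : ℝ ∂volume, ∃! k : ℤ, (2 : ℝ) ^ k * x ∈ E)

/-- `σ` is (a representative of) the interpolation map `σ_E^F` for wavelet sets `E, F`. -/
def IsInterpolationMap (E F : Set ℝ) (σ : ℝ → ℝ) : Prop :=
  Measurable σ ∧ σ 0 = 0 ∧
  (∀ᵐ s : ℝ ∂volume, s ∈ E → σ s ∈ F ∧ ∃ n : ℤ, σ s - s = 2 * Real.pi * n) ∧
  (∀ n : ℤ, ∀ᵐ s : ℝ ∂volume, (2 : ℝ) ^ (-n) * s ∈ E →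
    σ s = (2 : ℝ) ^ n * σ ((2 : ℝ) ^ (-n) * s))

/-- The `2π`-congruence domain of a map `σ`. -/
def CongruenceDomain (σ : ℝ → ℝ) : Set ℝ :=
  {s : ℝ | ∃ n : ℤ, σ s - s = 2 * Real.pi * n}

/-- `A` is `2π`-translation congruent to `B`. -/
def TransCongruent (A B : Set ℝ) : Prop :=
  ∃ P : ℤ → Set ℝ, (∀ n, MeasurableSet (P n)) ∧ IsAEPartition P A ∧
    IsAEPartition (fun (n : ℤ) => (fun x => x + 2 * Real.pi * (n : ℝ)) '' P n) B

/-- `A` is `2`-dilation congruent to `B`. -/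
def DilCongruent (A B : Set ℝ) : Prop :=
  ∃ P : ℤ → Set ℝ, (∀ n, MeasurableSet (P n)) ∧ IsAEPartition P A ∧
    IsAEPartition (fun (n : ℤ) => (fun x => (2 : ℝ) ^ n * x) '' P n) B

/-- The properties required of the piece `G₀` in Example 9 of the paper: a measurable
subset of `(([−2π, −11π/8) ∪ [−9π/8, −π)) − 2π) ∪ [−2π, −3π/2)` that is
`2π`-translation congruent to `[−2π, −11π/8) ∪ [−9π/8, −π)` and `2`-dilation
congruent to `[−2π, −3π/2)`. -/
def GoodGzero (G₀ : Set ℝ) : Prop :=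
  MeasurableSet G₀ ∧
  G₀ ⊆ ((fun x => x - 2 * π) ''
          (Ico (-(2 * π)) (-(11 * π / 8)) ∪ Ico (-(9 * π / 8)) (-π))) ∪
        Ico (-(2 * π)) (-(3 * π / 2)) ∧
  TransCongruent G₀ (Ico (-(2 * π)) (-(11 * π / 8)) ∪ Ico (-(9 * π / 8)) (-π)) ∧
  DilCongruent G₀ (Ico (-(2 * π)) (-(3 * π / 2)))

/-- The set `G` of Example 9 of the paper. -/
def Gset (G₀ : Set ℝ) : Set ℝ :=
  Ico (5 * π / 8) (7 * π / 8) ∪ Ico π (5 * π / 4) ∪ Ico (7 * π / 2) (4 * π) ∪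
    Ico (-(3 * π / 4)) (-(π / 2)) ∪ G₀

/-!
Both tiling properties of `G` come from congruence with a known tile: under the translations
`x ↦ x + 2πn`, `G` is congruent to `[−2π, 0)`, and under the dilations `x ↦ 2ⁿx`, to
`E = [−2π, −π) ∪ [π, 2π)`. The four explicit intervals of `G` are moved by one translation or
dilation each and `G₀` by hypothesis; congruent sets tile together because the pieces match the
orbit points of `x` in one set with those in the other.

For `s ∈ [7π/4, 2π)` both `σ s` and `s + 2π ∈ [7π/2, 4π)` are translates of `s` lying in `G`,
so `σ s = s + 2π` because `G` tiles under translation. By dilation `σ s = s + 4π` on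
`[7π/2, 4π)`, hence `σ (σ s) = s + 6π` on `[7π/4, 15π/8)`.

For existence, `x ↦ 2x + 2π` maps `[−2π, −3π/2)` onto `[−2π, −π)`, and the gap
`J₀ = [−11π/8, −9π/8)` of `A = [−2π, −11π/8) ∪ [−9π/8, −π)` pulls back to intervals `J₁, J₂, …`.
With `B = ⋃_{m ≥ 1} Jₘ`, the set `G₀ = B ∪ ((A \ B) − 2π)` works: it is `B ∪ (A \ B)` up to
translation and `B ∪ ([−2π, −3π/2) \ B)` up to dilation.
-/

open Equiv Filter

def IsOrbitTile (f : Perm ℝ) (A : Set ℝ) : Prop :=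
  ∀ᵐ x, ∃! n : ℤ, ⇑(f ^ n) x ∈ A

def OrbitCongruent (f : Perm ℝ) (A B : Set ℝ) : Prop :=
  ∃ P : ℤ → Set ℝ, (∀ n, MeasurableSet (P n)) ∧ IsAEPartition P A ∧
    IsAEPartition (fun n => ⇑(f ^ n) '' P n) B

section OrbitTiles

variable {f : Perm ℝ}

theorem zpow_apply_mem_image_zpow_iff {S : Set ℝ} {j n : ℤ} {x : ℝ} :
    (f ^ j) x ∈ (f ^ n) '' S ↔ (f ^ (j - n)) x ∈ S := by
  rw [Equiv.image_eq_preimage_symm, mem_preimage, ← Perm.inv_def, ← Perm.mul_apply, ← zpow_neg,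
    ← zpow_add, neg_add_eq_sub]

theorem image_zpow_eq_preimage_zpow_neg (n : ℤ) (S : Set ℝ) :
    ⇑(f ^ n) '' S = ⇑(f ^ (-n)) ⁻¹' S := by
  rw [Equiv.image_eq_preimage_symm, ← Perm.inv_def, zpow_neg]

theorem IsAEPartition.ae_mem_iff {P : ℤ → Set ℝ} {A : Set ℝ} (h : IsAEPartition P A) :
    ∀ᵐ y, y ∈ A ↔ ∃ n, y ∈ P n := by
  simpa only [mem_iUnion] using eventuallyEq_set.1 (measure_symmDiff_eq_zero_iff.1 h.1)

theorem IsAEPartition.ae_eq_of_mem {P : ℤ → Set ℝ} {A : Set ℝ} (h : IsAEPartition P A) :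
    ∀ᵐ y, ∀ n m, y ∈ P n → y ∈ P m → n = m := by
  refine ae_all_iff.2 fun n => ae_all_iff.2 fun m => ?_
  rcases eq_or_ne n m with rfl | hnm
  · exact ae_of_all _ fun _ _ _ => rfl
  · filter_upwards [measure_eq_zero_iff_ae_notMem.1 (h.2 n m hnm)] with y hy hn hm
    exact absurd ⟨hn, hm⟩ hy

theorem IsAEPartition.union {P Q : ℤ → Set ℝ} {A B : Set ℝ} (hP : IsAEPartition P A)
    (hQ : IsAEPartition Q B) (hAB : AEDisjoint volume A B) :
    IsAEPartition (fun n => P n ∪ Q n) (A ∪ B) := by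
  have hPA := measure_symmDiff_eq_zero_iff.1 hP.1
  have hQB := measure_symmDiff_eq_zero_iff.1 hQ.1
  have hPQ : ∀ n m, AEDisjoint volume (P n) (Q m) := fun n m =>
    hAB.mono_ae ((subset_iUnion P n).eventuallyLE.trans hPA.symm.le)
      ((subset_iUnion Q m).eventuallyLE.trans hQB.symm.le)
  refine ⟨measure_symmDiff_eq_zero_iff.2 ?_, fun n m hnm => ?_⟩
  · rw [iUnion_union_distrib]
    exact hPA.union hQB
  · change AEDisjoint volume (P n ∪ Q n) (P m ∪ Q m)
    simp only [AEDisjoint.union_left_iff, AEDisjoint.union_right_iff]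
    exact ⟨⟨hP.2 n m hnm, (hPQ m n).symm⟩, hPQ n m, hQ.2 n m hnm⟩

theorem OrbitCongruent.union {A B A' B' : Set ℝ} (h : OrbitCongruent f A B)
    (h' : OrbitCongruent f A' B') (hA : Disjoint A A') (hB : Disjoint B B') :
    OrbitCongruent f (A ∪ A') (B ∪ B') := by
  obtain ⟨P, hPm, hPA, hPB⟩ := h
  obtain ⟨P', hPm', hPA', hPB'⟩ := h'
  refine ⟨fun n => P n ∪ P' n, fun n => (hPm n).union (hPm' n), hPA.union hPA' hA.aedisjoint, ?_⟩
  simpa only [image_union] using hPB.union hPB' hB.aedisjoint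

theorem isAEPartition_ite (n : ℤ) (A : Set ℝ) :
    IsAEPartition (fun k => if k = n then A else ∅) A := by
  refine ⟨?_, fun k m hkm => ?_⟩
  · have hU : (⋃ k : ℤ, if k = n then A else ∅) = A :=
      (iUnion_subset fun k => by split_ifs <;> simp).antisymm (subset_iUnion_of_subset n (by simp))
    rw [hU, symmDiff_self, bot_eq_empty, measure_empty]
  · dsimp only
    split_ifs with hk hm <;> simp_all

theorem orbitCongruent_of_image_eq {A B : Set ℝ} (hA : MeasurableSet A) (n : ℤ)
    (h : (f ^ n) '' A = B) : OrbitCongruent f A B := by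
  refine ⟨fun k => if k = n then A else ∅, fun k => ?_, isAEPartition_ite n A, ?_⟩
  · dsimp only
    split_ifs
    exacts [hA, MeasurableSet.empty]
  · convert isAEPartition_ite n B using 2 with k
    dsimp only
    split_ifs with hk
    · rw [hk, h]
    · exact image_empty _

theorem ae_forall_zpow_apply (hf : ∀ n : ℤ, Measure.QuasiMeasurePreserving (f ^ n))
    {p : ℝ → Prop} (h : ∀ᵐ y, p y) : ∀ᵐ x, ∀ k : ℤ, p ((f ^ k) x) :=
  ae_all_iff.2 fun k => (hf k).ae h

theorem IsOrbitTile.of_orbitCongruent (hf : ∀ n : ℤ, Measure.QuasiMeasurePreserving (f ^ n))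
    {A B : Set ℝ} (hA : IsOrbitTile f A) (h : OrbitCongruent f B A) : IsOrbitTile f B := by
  obtain ⟨P, -, hPB, hPA⟩ := h
  filter_upwards [hA, ae_forall_zpow_apply hf hPB.ae_mem_iff,
    ae_forall_zpow_apply hf hPA.ae_mem_iff, ae_forall_zpow_apply hf hPA.ae_eq_of_mem]
    with x hxA hxB hxA' hxdisj
  simp only [zpow_apply_mem_image_zpow_iff] at hxA' hxdisj
  obtain ⟨j, hj, hj_unique⟩ := hxA
  obtain ⟨n, hn⟩ := (hxA' j).1 hj
  refine ⟨j - n, (hxB _).2 ⟨n, hn⟩, fun k hk => ?_⟩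
  obtain ⟨m, hm⟩ := (hxB k).1 hk
  have hkm : k + m = j := hj_unique _ ((hxA' _).2 ⟨m, by rwa [add_sub_cancel_right]⟩)
  subst hkm
  have hmn : m = n := hxdisj _ m n (by rwa [add_sub_cancel_right]) hn
  omega

end OrbitTiles

def twoPiTranslation : Perm ℝ := Equiv.addRight (2 * π)

def dyadicDilation : Perm ℝ := MulAction.toPermHom ℝˣ ℝ (Units.mk0 2 two_ne_zero)

theorem coe_twoPiTranslation_zpow (n : ℤ) : ⇑(twoPiTranslation ^ n) = fun x => x + 2 * π * n := by
  funext x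
  simp [twoPiTranslation, mul_comm]

theorem coe_dyadicDilation_zpow (n : ℤ) : ⇑(dyadicDilation ^ n) = fun x => (2 : ℝ) ^ n * x := by
  funext x
  rw [dyadicDilation, ← map_zpow]
  simp [Units.smul_def]

theorem quasiMeasurePreserving_twoPiTranslation_zpow (n : ℤ) :
    Measure.QuasiMeasurePreserving ⇑(twoPiTranslation ^ n) := by
  rw [coe_twoPiTranslation_zpow]
  exact (measurePreserving_add_right volume _).quasiMeasurePreserving

theorem quasiMeasurePreserving_dyadicDilation_zpow (n : ℤ) :
    Measure.QuasiMeasurePreserving ⇑(dyadicDilation ^ n) := by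
  rw [coe_dyadicDilation_zpow]
  exact Measure.quasiMeasurePreserving_smul volume (zpow_ne_zero n two_ne_zero)

theorem isDyadicWaveletSet_iff {E : Set ℝ} :
    IsDyadicWaveletSet E ↔
      MeasurableSet E ∧ IsOrbitTile twoPiTranslation E ∧ IsOrbitTile dyadicDilation E := by
  simp only [IsDyadicWaveletSet, IsOrbitTile, coe_twoPiTranslation_zpow, coe_dyadicDilation_zpow]

theorem transCongruent_iff {A B : Set ℝ} :
    TransCongruent A B ↔ OrbitCongruent twoPiTranslation A B := by
  simp only [TransCongruent, OrbitCongruent, coe_twoPiTranslation_zpow]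

theorem dilCongruent_iff {A B : Set ℝ} :
    DilCongruent A B ↔ OrbitCongruent dyadicDilation A B := by
  simp only [DilCongruent, OrbitCongruent, coe_dyadicDilation_zpow]

theorem isOrbitTile_twoPiTranslation_Ico (a : ℝ) :
    IsOrbitTile twoPiTranslation (Ico a (a + 2 * π)) :=
  ae_of_all _ fun x => by
    simpa only [coe_twoPiTranslation_zpow, zsmul_eq_mul, mul_comm] using
      existsUnique_add_zsmul_mem_Ico Real.two_pi_pos x a

theorem log_two_zpow_mul {x : ℝ} (hx : 0 < x) (k : ℤ) :
    Real.log ((2 : ℝ) ^ k * x) = Real.log x + k • Real.log 2 := by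
  rw [Real.log_mul (zpow_ne_zero k two_ne_zero) hx.ne', Real.log_zpow, zsmul_eq_mul, add_comm]

theorem existsUnique_two_zpow_mul_mem_Ico {a x : ℝ} (ha : 0 < a) (hx : 0 < x) :
    ∃! k : ℤ, (2 : ℝ) ^ k * x ∈ Ico a (2 * a) := by
  refine (existsUnique_congr fun k => ?_).2
    (existsUnique_add_zsmul_mem_Ico (Real.log_pos one_lt_two) (Real.log x) (Real.log a))
  have hkx : 0 < (2 : ℝ) ^ k * x := by positivity
  rw [mem_Ico, mem_Ico, ← log_two_zpow_mul hx, Real.log_le_log_iff ha hkx,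
    ← Real.log_mul ha.ne' two_ne_zero, Real.log_lt_log_iff hkx (by positivity), mul_comm a]

theorem existsUnique_two_zpow_mul_mem_Ioc {a x : ℝ} (ha : 0 < a) (hx : 0 < x) :
    ∃! k : ℤ, (2 : ℝ) ^ k * x ∈ Ioc a (2 * a) := by
  refine (existsUnique_congr fun k => ?_).2
    (existsUnique_add_zsmul_mem_Ioc (Real.log_pos one_lt_two) (Real.log x) (Real.log a))
  have hkx : 0 < (2 : ℝ) ^ k * x := by positivity
  rw [mem_Ioc, mem_Ioc, ← log_two_zpow_mul hx, Real.log_lt_log_iff ha hkx,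
    ← Real.log_mul ha.ne' two_ne_zero, Real.log_le_log_iff hkx (by positivity), mul_comm a]

def shannonSet : Set ℝ := Ico (-(2 * π)) (-π) ∪ Ico π (2 * π)

theorem isOrbitTile_dyadicDilation_shannonSet : IsOrbitTile dyadicDilation shannonSet := by
  filter_upwards [Measure.ae_ne volume 0] with x hx
  simp only [coe_dyadicDilation_zpow, shannonSet, mem_union, mem_Ico]
  rcases hx.lt_or_gt with hneg | hpos
  · refine (existsUnique_congr fun k => ?_).2
      (existsUnique_two_zpow_mul_mem_Ioc Real.pi_pos (neg_pos.2 hneg))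
    have : (2 : ℝ) ^ k * x < 0 := mul_neg_of_pos_of_neg (by positivity) hneg
    rw [mem_Ioc, mul_neg]
    grind [Real.pi_pos]
  · refine (existsUnique_congr fun k => ?_).2 (existsUnique_two_zpow_mul_mem_Ico Real.pi_pos hpos)
    have : 0 < (2 : ℝ) ^ k * x := by positivity
    rw [mem_Ico]
    grind [Real.pi_pos]

theorem orbitCongruent_twoPiTranslation_Ico (n : ℤ) {a b c d : ℝ} (hc : a + 2 * π * n = c)
    (hd : b + 2 * π * n = d) : OrbitCongruent twoPiTranslation (Ico a b) (Ico c d) :=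
  orbitCongruent_of_image_eq measurableSet_Ico n <| by
    rw [coe_twoPiTranslation_zpow, image_add_const_Ico, hc, hd]

theorem orbitCongruent_dyadicDilation_Ico (n : ℤ) {a b c d : ℝ} (hc : 2 ^ n * a = c)
    (hd : 2 ^ n * b = d) : OrbitCongruent dyadicDilation (Ico a b) (Ico c d) :=
  orbitCongruent_of_image_eq measurableSet_Ico n <| by
    rw [coe_dyadicDilation_zpow, image_mul_left_Ico (by positivity), hc, hd]

theorem orbitCongruent_gset {f : Perm ℝ} {G₀ J₁ J₂ J₃ J₄ T : Set ℝ}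
    (hG₀ : G₀ ⊆ Iio (-(3 * π / 2)))
    (h₁ : OrbitCongruent f (Ico (5 * π / 8) (7 * π / 8)) J₁)
    (h₂ : OrbitCongruent f (Ico π (5 * π / 4)) J₂)
    (h₃ : OrbitCongruent f (Ico (7 * π / 2) (4 * π)) J₃)
    (h₄ : OrbitCongruent f (Ico (-(3 * π / 4)) (-(π / 2))) J₄)
    (h₀ : OrbitCongruent f G₀ T) (h₁₂ : Disjoint J₁ J₂) (h₁₂₃ : Disjoint (J₁ ∪ J₂) J₃)
    (h₁₂₃₄ : Disjoint (J₁ ∪ J₂ ∪ J₃) J₄) (hT : Disjoint (J₁ ∪ J₂ ∪ J₃ ∪ J₄) T) :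
    OrbitCongruent f (Gset G₀) (J₁ ∪ J₂ ∪ J₃ ∪ J₄ ∪ T) := by
  have hπ := Real.pi_pos
  refine (((h₁.union h₂ ?_ h₁₂).union h₃ ?_ h₁₂₃).union h₄ ?_ h₁₂₃₄).union h₀ ?_ hT
  · simp only [disjoint_left, mem_Ico]; grind
  · simp only [disjoint_left, mem_union, mem_Ico]; grind
  · simp only [disjoint_left, mem_union, mem_Ico]; grind
  · refine (Iio_disjoint_Ici (by linarith : -(3 * π / 2) ≤ -(3 * π / 4))).symm.mono
      (fun x hx => ?_) hG₀
    simp only [mem_union, mem_Ico] at hx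
    exact mem_Ici.2 (by grind)

theorem isOrbitTile_twoPiTranslation_gset {G₀ : Set ℝ} (hG₀ : G₀ ⊆ Iio (-(3 * π / 2)))
    (h : OrbitCongruent twoPiTranslation G₀
      (Ico (-(2 * π)) (-(11 * π / 8)) ∪ Ico (-(9 * π / 8)) (-π))) :
    IsOrbitTile twoPiTranslation (Gset G₀) := by
  have hπ := Real.pi_pos
  have hG := orbitCongruent_gset hG₀
    (orbitCongruent_twoPiTranslation_Ico (-1) (c := -(11 * π / 8)) (d := -(9 * π / 8))
      (by push_cast; ring) (by push_cast; ring))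
    (orbitCongruent_twoPiTranslation_Ico (-1) (c := -π) (d := -(3 * π / 4))
      (by push_cast; ring) (by push_cast; ring))
    (orbitCongruent_twoPiTranslation_Ico (-2) (c := -(π / 2)) (d := 0)
      (by push_cast; ring) (by push_cast; ring))
    (orbitCongruent_twoPiTranslation_Ico 0 (c := -(3 * π / 4)) (d := -(π / 2))
      (by push_cast; ring) (by push_cast; ring))
    h ?_ ?_ ?_ ?_
  · refine (isOrbitTile_twoPiTranslation_Ico (-(2 * π))).of_orbitCongruent
      quasiMeasurePreserving_twoPiTranslation_zpow ?_
    convert hG using 1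
    ext x
    simp only [mem_union, mem_Ico]
    grind
  all_goals simp only [disjoint_left, mem_union, mem_Ico]; grind

theorem isOrbitTile_dyadicDilation_gset {G₀ : Set ℝ} (hG₀ : G₀ ⊆ Iio (-(3 * π / 2)))
    (h : OrbitCongruent dyadicDilation G₀ (Ico (-(2 * π)) (-(3 * π / 2)))) :
    IsOrbitTile dyadicDilation (Gset G₀) := by
  have hπ := Real.pi_pos
  have hG := orbitCongruent_gset hG₀
    (orbitCongruent_dyadicDilation_Ico 1 (c := 5 * π / 4) (d := 7 * π / 4)
      (by norm_num; ring) (by norm_num; ring))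
    (orbitCongruent_dyadicDilation_Ico 0 (c := π) (d := 5 * π / 4) (by norm_num) (by norm_num))
    (orbitCongruent_dyadicDilation_Ico (-1) (c := 7 * π / 4) (d := 2 * π)
      (by norm_num; ring) (by norm_num; ring))
    (orbitCongruent_dyadicDilation_Ico 1 (c := -(3 * π / 2)) (d := -π)
      (by norm_num; ring) (by norm_num; ring))
    h ?_ ?_ ?_ ?_
  · refine isOrbitTile_dyadicDilation_shannonSet.of_orbitCongruent
      quasiMeasurePreserving_dyadicDilation_zpow ?_
    convert hG using 1
    ext x
    simp only [shannonSet, mem_union, mem_Ico]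
    grind
  all_goals simp only [disjoint_left, mem_union, mem_Ico]; grind

theorem not_ae_involutive_of_isInterpolationMap {F : Set ℝ} (hF : IsOrbitTile twoPiTranslation F)
    (hsub : Ico (7 * π / 2) (4 * π) ⊆ F) {σ : ℝ → ℝ}
    (hσ : IsInterpolationMap shannonSet F σ) : ¬ ∀ᵐ s, σ (σ s) = s := by
  have hπ := Real.pi_pos
  obtain ⟨-, -, htrans, hdil⟩ := hσ
  have h₁ : ∀ᵐ s, s ∈ Ico (7 * π / 4) (2 * π) → σ s = s + 2 * π := by
    filter_upwards [htrans, hF] with s hs hsF ⟨hs₁, hs₂⟩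
    obtain ⟨hσF, n, hn⟩ := hs (Or.inr ⟨by linarith, hs₂⟩)
    simp only [coe_twoPiTranslation_zpow] at hsF
    have hn₁ : n = 1 := hsF.unique (by rwa [← hn, add_sub_cancel])
      (hsub ⟨by push_cast; linarith, by push_cast; linarith⟩)
    rw [← sub_add_cancel (σ s) s, hn, hn₁, Int.cast_one, mul_one, add_comm]
  have h₂ : ∀ᵐ s, s ∈ Ico (7 * π / 2) (4 * π) → σ s = s + 4 * π := by
    filter_upwards [hdil 1, (Measure.quasiMeasurePreserving_smul volume
      (inv_ne_zero (two_ne_zero : (2 : ℝ) ≠ 0))).ae h₁] with s hhom hhalf ⟨hs₁, hs₂⟩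
    simp only [smul_eq_mul, zpow_neg, zpow_one] at hhom hhalf
    rw [hhom (Or.inr ⟨by linarith, by linarith⟩), hhalf ⟨by linarith, by linarith⟩]
    ring
  intro hinv
  have h₃ : ∀ᵐ s, s ∉ Ico (7 * π / 4) (15 * π / 8) := by
    filter_upwards [h₁, (measurePreserving_add_right volume (2 * π)).quasiMeasurePreserving.ae h₂,
      hinv] with s hs₁ hs₂ hs ⟨hlo, hhi⟩
    rw [hs₁ ⟨hlo, by linarith⟩, hs₂ ⟨by linarith, by linarith⟩] at hs
    linarith
  have hnull := measure_eq_zero_iff_ae_notMem.2 h₃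
  rw [Real.volume_Ico, ENNReal.ofReal_eq_zero] at hnull
  linarith

theorem GoodGzero.subset {G₀ : Set ℝ} (h : GoodGzero G₀) :
    G₀ ⊆ Ico (-(4 * π)) (-(3 * π)) ∪ Ico (-(2 * π)) (-(3 * π / 2)) := by
  refine h.2.1.trans fun x hx => ?_
  rw [image_union, image_sub_const_Ico, image_sub_const_Ico] at hx
  simp only [mem_union, mem_Ico] at hx ⊢
  grind [Real.pi_pos]

theorem gset_subset_translates_shannonSet {G₀ : Set ℝ}
    (hG₀ : G₀ ⊆ Ico (-(4 * π)) (-(3 * π)) ∪ Ico (-(2 * π)) (-(3 * π / 2))) :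
    Gset G₀ ⊆ ((fun x => x - 2 * π) '' shannonSet) ∪ shannonSet ∪
      ((fun x => x + 2 * π) '' shannonSet) := by
  intro x hx
  have hG := @hG₀ x
  simp only [Gset, shannonSet, image_union, image_sub_const_Ico, image_add_const_Ico, mem_union,
    mem_Ico] at hx hG ⊢
  grind [Real.pi_pos]

theorem measure_gset_inter_pos (G₀ : Set ℝ) : 0 < volume (Gset G₀ ∩ Ico (-π) π) := by
  have hπ := Real.pi_pos
  calc (0 : ENNReal) < volume (Ico (5 * π / 8) (7 * π / 8)) := by
        rw [Real.volume_Ico]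
        exact ENNReal.ofReal_pos.2 (by linarith)
    _ ≤ volume (Gset G₀ ∩ Ico (-π) π) := measure_mono fun x hx =>
        ⟨Or.inl (Or.inl (Or.inl (Or.inl hx))), by linarith [hx.1], by linarith [hx.2]⟩

def gapInterval (m : ℕ) : Set ℝ :=
  Ico (-(2 * π) + 5 * π / 2 ^ (m + 3)) (-(2 * π) + 7 * π / 2 ^ (m + 3))

def gapUnion : Set ℝ := ⋃ m : ℕ, gapInterval (m + 1)

def gzero : Set ℝ :=
  gapUnion ∪ (fun x => x + 2 * π) ⁻¹'
    ((Ico (-(2 * π)) (-(11 * π / 8)) ∪ Ico (-(9 * π / 8)) (-π)) \ gapUnion)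

theorem preimage_gapInterval (m : ℕ) :
    (fun x => 2 * x + 2 * π) ⁻¹' gapInterval m = gapInterval (m + 1) := by
  have hpow : (2 : ℝ) ^ (m + 1 + 3) = 2 * 2 ^ (m + 3) := by ring
  ext x
  simp only [gapInterval, mem_preimage, mem_Ico, hpow]
  constructor <;> rintro ⟨h₁, h₂⟩ <;> constructor <;> field_simp at h₁ h₂ ⊢ <;> linarith

theorem gapInterval_succ_subset (m : ℕ) :
    gapInterval (m + 1) ⊆ Ico (-(2 * π)) (-(3 * π / 2)) := by
  have hπ := Real.pi_pos
  have hpow : (16 : ℝ) ≤ 2 ^ (m + 1 + 3) := by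
    calc (16 : ℝ) = 2 ^ 4 := by norm_num
      _ ≤ 2 ^ (m + 1 + 3) := pow_le_pow_right₀ (by norm_num) (by omega)
  have h₅ : 0 ≤ 5 * π / 2 ^ (m + 1 + 3) := by positivity
  have h₇ : 7 * π / 2 ^ (m + 1 + 3) ≤ 7 * π / 16 :=
    div_le_div_of_nonneg_left (by positivity) (by norm_num) hpow
  rintro x ⟨h₁, h₂⟩
  exact ⟨by linarith, by linarith⟩

theorem gapUnion_subset : gapUnion ⊆ Ico (-(2 * π)) (-(3 * π / 2)) :=
  iUnion_subset gapInterval_succ_subset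

theorem measurableSet_gapUnion : MeasurableSet gapUnion :=
  MeasurableSet.iUnion fun _ => measurableSet_Ico

theorem preimage_diff_gapUnion :
    (fun x => 2 * x + 2 * π) ⁻¹'
        ((Ico (-(2 * π)) (-(11 * π / 8)) ∪ Ico (-(9 * π / 8)) (-π)) \ gapUnion) =
      Ico (-(2 * π)) (-(3 * π / 2)) \ gapUnion := by
  have hπ := Real.pi_pos
  have hA : Ico (-(2 * π)) (-(11 * π / 8)) ∪ Ico (-(9 * π / 8)) (-π) =
      Ico (-(2 * π)) (-π) \ gapInterval 0 := by
    ext x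
    have h8 : (2 : ℝ) ^ (0 + 3) = 8 := by norm_num
    simp only [gapInterval, h8, mem_union, Set.mem_sdiff, mem_Ico]
    grind
  have hI : (fun x => 2 * x + 2 * π) ⁻¹' Ico (-(2 * π)) (-π) = Ico (-(2 * π)) (-(3 * π / 2)) := by
    ext x
    simp only [mem_preimage, mem_Ico]
    constructor <;> rintro ⟨h₁, h₂⟩ <;> constructor <;> linarith
  rw [hA, Set.sdiff_sdiff, gapUnion, union_iUnion_nat_succ, Set.preimage_sdiff, preimage_iUnion,
    hI]
  simp only [preimage_gapInterval]

theorem goodGzero_gzero : GoodGzero gzero := by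
  have hπ := Real.pi_pos
  unfold gzero
  set A := Ico (-(2 * π)) (-(11 * π / 8)) ∪ Ico (-(9 * π / 8)) (-π) with hA
  set C := (fun x => x + 2 * π) ⁻¹' (A \ gapUnion)
  have hC : MeasurableSet C :=
    measurable_add_const _ (((measurableSet_Ico).union measurableSet_Ico).diff
      measurableSet_gapUnion)
  have hBA : gapUnion ⊆ A := fun x hx => Or.inl ⟨(gapUnion_subset hx).1, by
    linarith [(gapUnion_subset hx).2]⟩
  have hBC : Disjoint gapUnion C := by
    refine disjoint_left.2 fun x hB hC => ?_
    have := gapUnion_subset hB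
    simp only [C, hA, mem_preimage, Set.mem_sdiff, mem_union, mem_Ico] at hC this
    grind
  refine ⟨measurableSet_gapUnion.union hC, ?_, ?_, ?_⟩
  · rintro x (hx | hx)
    · exact Or.inr (gapUnion_subset hx)
    · exact Or.inl ⟨x + 2 * π, hx.1, add_sub_cancel_right x _⟩
  · rw [transCongruent_iff, ← hA, ← Set.union_sdiff_cancel hBA]
    refine (orbitCongruent_of_image_eq measurableSet_gapUnion 0 (by simp)).union
      (orbitCongruent_of_image_eq hC 1 ?_) hBC disjoint_sdiff_right
    rw [image_zpow_eq_preimage_zpow_neg, coe_twoPiTranslation_zpow]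
    ext x
    simp only [C, mem_preimage, Int.cast_neg, Int.cast_one, mul_neg, mul_one, neg_add_cancel_right]
  · rw [dilCongruent_iff, ← Set.union_sdiff_cancel gapUnion_subset]
    refine (orbitCongruent_of_image_eq measurableSet_gapUnion 0 (by simp)).union
      (orbitCongruent_of_image_eq hC (-1) ?_) hBC disjoint_sdiff_right
    rw [image_zpow_eq_preimage_zpow_neg, neg_neg, coe_dyadicDilation_zpow, ← preimage_diff_gapUnion,
      ← hA]
    ext x
    simp only [C, mem_preimage, zpow_one]

/-- Example 9 of the paper.  Let `E = [−2π, −π) ∪ [π, 2π)`.  There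
exists `G₀` as above, and for any such `G₀` the set `G = Gset G₀` is a dyadic wavelet
set contained in `(E − 2π) ∪ E ∪ (E + 2π)` for which `G ∩ [−π, π)` has positive
measure and `(E, G)` is not an interpolation pair. -/
theorem stmt_15 :
    (∃ G₀ : Set ℝ, GoodGzero G₀) ∧
    (∀ G₀ : Set ℝ, GoodGzero G₀ →
      IsDyadicWaveletSet (Gset G₀) ∧
      Gset G₀ ⊆
        ((fun x => x - 2 * π) '' (Ico (-(2 * π)) (-π) ∪ Ico π (2 * π))) ∪
          (Ico (-(2 * π)) (-π) ∪ Ico π (2 * π)) ∪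
          ((fun x => x + 2 * π) '' (Ico (-(2 * π)) (-π) ∪ Ico π (2 * π))) ∧
      0 < volume (Gset G₀ ∩ Ico (-π) π) ∧
      ∀ σ : ℝ → ℝ,
        IsInterpolationMap (Ico (-(2 * π)) (-π) ∪ Ico π (2 * π)) (Gset G₀) σ →
        ¬ (∀ᵐ s : ℝ ∂volume, σ (σ s) = s)) := by
  refine ⟨⟨gzero, goodGzero_gzero⟩, fun G₀ hG₀ => ?_⟩
  have hsub := hG₀.subset
  obtain ⟨hmeas, -, htrans, hdil⟩ := hG₀
  have hIio : G₀ ⊆ Iio (-(3 * π / 2)) := fun x hx => by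
    have := hsub hx
    simp only [mem_union, mem_Ico] at this
    exact mem_Iio.2 (by grind [Real.pi_pos])
  have htile := isOrbitTile_twoPiTranslation_gset hIio (transCongruent_iff.1 htrans)
  have hmeasG : MeasurableSet (Gset G₀) :=
    (((measurableSet_Ico.union measurableSet_Ico).union measurableSet_Ico).union
      measurableSet_Ico).union hmeas
  refine ⟨isDyadicWaveletSet_iff.2
      ⟨hmeasG, htile, isOrbitTile_dyadicDilation_gset hIio (dilCongruent_iff.1 hdil)⟩,
    gset_subset_translates_shannonSet hsub, measure_gset_inter_pos G₀, fun σ hσ => ?_⟩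
  exact not_ae_involutive_of_isInterpolationMap htile
    (fun x hx => Or.inl (Or.inl (Or.inr hx))) hσ
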